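/- There exists a constant C > 0 such that the following holds for all positive integers n and reals θ, p, ε with 0 < θ ≤ 1/C, 0 < p ≤ 1/C, ε ≤ θ^C/C, ε ≤ p^C/C and n ≥ C/ε^C. Let K be a properly edge-coloured balanced bipartite graph with parts X, Y of size n, containing pairwise colour-disjoint subgraphs: a rainbow matching M₀ with e(M₀) ≥ (1−ε)n; a (p(θn)², θn)-dense graph E; and graphs D_X, D_Y such that every x ∈ X has degree at least 2θn in D_X and every y ∈ Y has degree at least 2θn in D_Y. Then there is a perfect rainbow matching N contained in M₀ ∪ E ∪ D_X ∪ D_Y which uses at most εn edges from each of E, D_X and D_Y, such that every edge of N lying in D_X has its X-endpoint outside V(M₀) and every edge of N lying in D_Y has its Y-endpoint outside V(M₀). -/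

import Mathlib

/-!
Take `C = 4`, so that `4εn ≤ pθn ≤ θn`. Grow a rainbow matching `N` from `M₀` one edge at a
time; after `k` steps `N` has at most `k` edges in each of `E`, `DX`, `DY` and misses at most
`2k` edges of `M₀`, and `n - |M₀| ≤ εn` steps are needed. In a step, pick `x ∈ X` and `y ∈ Y`
not covered by `N`. As `DX` has minimum degree `2θn`, at least `θn` edges `g ∈ M₀ ∩ N` have
`(x, g.2) ∈ DX` in a colour not used by `N`; likewise at least `θn` edges `h ∈ M₀ ∩ N` have such
an edge `(h.1, y) ∈ DY`. Density gives `p s²` edges of `E` between the `X`-ends of the `g`s and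
the `Y`-ends of the `h`s (`s ≥ θn`), and by properness at most `k s < p s²` of them repeat a
colour of `N`. For a fresh `(g.1, h.2) ∈ E`, replacing `g, h` by `(x, g.2), (g.1, h.2), (h.1, y)`
gives a rainbow matching with one more edge.
-/

/-- Degree of a vertex `x` of the first part in a bipartite graph given as a set of pairs. -/
def bdegX {n : ℕ} (G : Finset (Fin n × Fin n)) (x : Fin n) : ℕ :=
  (G.filter (fun e => e.1 = x)).card

/-- Degree of a vertex `y` of the second part in a bipartite graph given as a set of pairs. -/
def bdegY {n : ℕ} (G : Finset (Fin n × Fin n)) (y : Fin n) : ℕ :=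
  (G.filter (fun e => e.2 = y)).card

/-- A set of pairs is a matching if distinct edges share no endpoint. -/
def IsBipMatching {n : ℕ} (M : Finset (Fin n × Fin n)) : Prop :=
  ∀ e ∈ M, ∀ f ∈ M, e ≠ f → e.1 ≠ f.1 ∧ e.2 ≠ f.2

/-- A bipartite graph `E` is `(e, m)`-dense if for every `λ ≥ 1` and all sets `A`, `B` of the
two parts with `|A| = |B| = λm` there are at least `λ²e` edges of `E` between `A` and `B`. -/
def BipDense {n : ℕ} (E : Finset (Fin n × Fin n)) (e m : ℝ) : Prop :=
  ∀ lam : ℝ, 1 ≤ lam → ∀ A B : Finset (Fin n),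
    (A.card : ℝ) = lam * m → (B.card : ℝ) = lam * m →
    lam ^ 2 * e ≤ ((E.filter (fun p => p.1 ∈ A ∧ p.2 ∈ B)).card : ℝ)

/-- Two subgraphs are colour-disjoint if no colour appears on both. -/
def ColourDisjoint {n : ℕ} (c : Fin n × Fin n → ℕ) (A B : Finset (Fin n × Fin n)) : Prop :=
  ∀ e ∈ A, ∀ f ∈ B, c e ≠ c f

open Finset

theorem card_add_card_inter_le_card_filter {α κ : Type*} [DecidableEq α] [DecidableEq κ]
    {S T D L : Finset α} {φ : α → α} {c : α → κ}
    (hφT : ∀ g ∈ S, φ g ∈ T) (hφ : Set.InjOn φ S) (hc : Set.InjOn c ↑(T ∩ D)) :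
    #S + #(T ∩ D) ≤ #(S.filter fun g => φ g ∈ D ∧ c (φ g) ∉ L.image c) + #T + #L := by
  have hout : #(S.filter fun g => φ g ∉ D) ≤ #(T \ D) :=
    card_le_card_of_injOn φ (fun g hg => by simp_all) (hφ.mono (filter_subset _ _))
  have hclash : #(S.filter fun g => φ g ∈ D ∧ c (φ g) ∈ L.image c) ≤ #(L.image c) := by
    refine card_le_card_of_injOn (c ∘ φ) (fun g hg => by simp_all) fun g hg g' hg' hgg' => ?_
    simp only [coe_filter, Set.mem_ofPred_eq] at hg hg'
    exact hφ hg.1 hg'.1 (hc (by simp [hφT _ hg.1, hg.2.1]) (by simp [hφT _ hg'.1, hg'.2.1]) hgg')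
  have hsplit := card_filter_add_card_filter_not (s := S) fun g => φ g ∈ D
  have hsplitD := card_filter_add_card_filter_not (s := S.filter fun g => φ g ∈ D)
    fun g => c (φ g) ∉ L.image c
  simp only [filter_filter, not_not] at hsplitD
  have := card_sdiff_add_card_inter T D
  have := card_image_le (s := L) (f := c)
  omega

theorem exists_mem_colour_notMem_image {α β κ : Type*} [DecidableEq κ]
    {F L : Finset (α × β)} {A : Finset α} {c : α × β → κ}
    (hFA : ∀ q ∈ F, q.1 ∈ A) (hc : ∀ q ∈ F, ∀ r ∈ F, q.1 = r.1 → c q = c r → q = r)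
    (hlt : #L * #A < #F) : ∃ q ∈ F, c q ∉ L.image c := by
  by_contra! h
  have hF : #F ≤ #(L.image c ×ˢ A) :=
    card_le_card_of_injOn (fun q => (c q, q.1)) (fun q hq => mem_product.2 ⟨h q hq, hFA q hq⟩)
      fun q hq r hr hqr => hc q hq r hr (Prod.ext_iff.1 hqr).2 (Prod.ext_iff.1 hqr).1
  rw [card_product] at hF
  exact (hF.trans (Nat.mul_le_mul_right _ card_image_le)).not_gt hlt

theorem Set.InjOn.insert_of_notMem_image {α κ : Type*} [DecidableEq α] [DecidableEq κ]
    {s : Finset α} {c : α → κ} {a : α} (hs : Set.InjOn c ↑s) (ha : c a ∉ s.image c) :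
    Set.InjOn c ↑(insert a s) := by
  rw [coe_insert]
  exact (Set.injOn_insert fun has => ha (Finset.mem_image_of_mem c has)).2 ⟨hs, by simpa using ha⟩

section BipartiteGraphs

variable {n : ℕ}

def IsProperColouring (c : Fin n × Fin n → ℕ) (G : Finset (Fin n × Fin n)) : Prop :=
  ∀ e ∈ G, ∀ f ∈ G, e ≠ f → e.1 = f.1 ∨ e.2 = f.2 → c e ≠ c f

namespace IsProperColouring

variable {c : Fin n × Fin n → ℕ} {G : Finset (Fin n × Fin n)} {e f : Fin n × Fin n}

theorem mono {H : Finset (Fin n × Fin n)} (hG : IsProperColouring c G) (hHG : H ⊆ G) :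
    IsProperColouring c H :=
  fun e he f hf => hG e (hHG he) f (hHG hf)

theorem eq_of_fst_eq (hG : IsProperColouring c G) (he : e ∈ G) (hf : f ∈ G) (h1 : e.1 = f.1)
    (hc : c e = c f) : e = f :=
  by_contra fun hne => hG e he f hf hne (.inl h1) hc

theorem eq_of_snd_eq (hG : IsProperColouring c G) (he : e ∈ G) (hf : f ∈ G) (h2 : e.2 = f.2)
    (hc : c e = c f) : e = f :=
  by_contra fun hne => hG e he f hf hne (.inr h2) hc

end IsProperColouring

namespace IsBipMatching

variable {M : Finset (Fin n × Fin n)} {e f : Fin n × Fin n}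

theorem eq_of_fst_eq (hM : IsBipMatching M) (he : e ∈ M) (hf : f ∈ M) (h1 : e.1 = f.1) : e = f :=
  by_contra fun hne => (hM e he f hf hne).1 h1

theorem eq_of_snd_eq (hM : IsBipMatching M) (he : e ∈ M) (hf : f ∈ M) (h2 : e.2 = f.2) : e = f :=
  by_contra fun hne => (hM e he f hf hne).2 h2

theorem injOn_fst (hM : IsBipMatching M) : Set.InjOn Prod.fst (M : Set (Fin n × Fin n)) :=
  fun _ he _ hf => hM.eq_of_fst_eq he hf

theorem injOn_snd (hM : IsBipMatching M) : Set.InjOn Prod.snd (M : Set (Fin n × Fin n)) :=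
  fun _ he _ hf => hM.eq_of_snd_eq he hf

theorem mono {N : Finset (Fin n × Fin n)} (hM : IsBipMatching M) (hNM : N ⊆ M) :
    IsBipMatching N :=
  fun e he f hf => hM e (hNM he) f (hNM hf)

theorem card_le (hM : IsBipMatching M) : #M ≤ n := by
  simpa [card_image_of_injOn hM.injOn_fst] using card_le_univ (M.image Prod.fst)

theorem insert (hM : IsBipMatching M) (h1 : e.1 ∉ M.image Prod.fst)
    (h2 : e.2 ∉ M.image Prod.snd) : IsBipMatching (insert e M) := by
  have hfresh : ∀ f ∈ M, e.1 ≠ f.1 ∧ e.2 ≠ f.2 := fun f hf =>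
    ⟨fun h => h1 (mem_image.2 ⟨f, hf, h.symm⟩), fun h => h2 (mem_image.2 ⟨f, hf, h.symm⟩)⟩
  intro a ha b hb hab
  rw [mem_insert] at ha hb
  rcases ha with rfl | haM <;> rcases hb with rfl | hbM
  · exact absurd rfl hab
  · exact hfresh b hbM
  · exact (hfresh a haM).imp Ne.symm Ne.symm
  · exact hM a haM b hbM hab

end IsBipMatching

theorem exists_notMem_image_of_card_lt {α : Type*} {N : Finset α} (f : α → Fin n)
    (hN : #N < n) : ∃ x, x ∉ N.image f := by
  obtain ⟨x, -, hx⟩ := exists_mem_notMem_of_card_lt_card (s := N.image f) (t := univ)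
    (by simpa using card_image_le.trans_lt hN)
  exact ⟨x, hx⟩

namespace ColourDisjoint

variable {c : Fin n × Fin n → ℕ} {A B : Finset (Fin n × Fin n)} {e : Fin n × Fin n}

theorem symm (h : ColourDisjoint c A B) : ColourDisjoint c B A :=
  fun a ha b hb hc => h b hb a ha hc.symm

theorem notMem_right (h : ColourDisjoint c A B) (he : e ∈ A) : e ∉ B :=
  fun heB => h e he e heB rfl

theorem notMem_left (h : ColourDisjoint c A B) (he : e ∈ B) : e ∉ A :=
  fun heA => h e heA e he rfl

theorem union_left {C : Finset (Fin n × Fin n)} (hA : ColourDisjoint c A C)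
    (hB : ColourDisjoint c B C) : ColourDisjoint c (A ∪ B) C := fun e he =>
  (mem_union.1 he).elim (hA e) (hB e)

theorem colour_notMem_image {N R : Finset (Fin n × Fin n)} (h : ColourDisjoint c R B)
    (hN : N ⊆ B ∪ R) (he : e ∈ B) (hNe : c e ∉ (N ∩ B).image c) : c e ∉ N.image c := by
  simp only [mem_image, mem_inter, not_exists, not_and] at hNe ⊢
  intro f hf hfe
  rcases mem_union.1 (hN hf) with hfB | hfR
  · exact hNe f ⟨hf, hfB⟩ hfe
  · exact h f hfR e he hfe

theorem inter_eq_empty (h : ColourDisjoint c A B) : A ∩ B = ∅ :=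
  eq_empty_of_forall_notMem fun _ he => h.notMem_right (mem_inter.1 he).1 (mem_inter.1 he).2

end ColourDisjoint

theorem bdegX_eq_card_inter (D : Finset (Fin n × Fin n)) (x : Fin n) :
    bdegX D x = #(({x} ×ˢ univ) ∩ D) := by
  unfold bdegX; congr 1; ext ⟨a, b⟩; simp [and_comm, eq_comm]

theorem bdegY_eq_card_inter (D : Finset (Fin n × Fin n)) (y : Fin n) :
    bdegY D y = #((univ ×ˢ {y}) ∩ D) := by
  unfold bdegY; congr 1; ext ⟨a, b⟩; simp [and_comm, eq_comm]

theorem BipDense.exists_subsets_card_eq {E : Finset (Fin n × Fin n)} {p m : ℝ}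
    (hE : BipDense E (p * m ^ 2) m) (hm : 0 < m) {A B : Finset (Fin n)}
    (hA : m ≤ #A) (hB : m ≤ #B) :
    ∃ A' ⊆ A, ∃ B' ⊆ B, #B' = #A' ∧ m ≤ #A' ∧
      p * #A' ^ 2 ≤ #(E.filter fun q => q.1 ∈ A' ∧ q.2 ∈ B') := by
  obtain ⟨A', hA'A, hA'⟩ := exists_subset_card_eq (min_le_left #A #B)
  obtain ⟨B', hB'B, hB'⟩ := exists_subset_card_eq (min_le_right #A #B)
  have hmA' : m ≤ #A' := by rw [hA', Nat.cast_min]; exact le_min hA hB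
  have hcard : ((#A' : ℕ) : ℝ) = #A' / m * m := (div_mul_cancel₀ _ hm.ne').symm
  refine ⟨A', hA'A, B', hB'B, hB'.trans hA'.symm, hmA', ?_⟩
  have := hE (#A' / m) ((one_le_div hm).2 hmA') A' B' hcard (by rw [hB', ← hA']; exact hcard)
  calc p * (#A' : ℝ) ^ 2 = (#A' / m) ^ 2 * (p * m ^ 2) := by
        rw [div_pow, div_mul_eq_mul_div, eq_div_iff (by positivity)]; ring
    _ ≤ _ := this

end BipartiteGraphs

section Augment

variable {n : ℕ}

/-- Switching `N` along the alternating path `x, g.2, g.1, h.2, h.1, y`. -/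
def augment (N : Finset (Fin n × Fin n)) (x y : Fin n) (g h : Fin n × Fin n) :
    Finset (Fin n × Fin n) :=
  insert (x, g.2) (insert (g.1, h.2) (insert (h.1, y) (N \ {g, h})))

variable {N : Finset (Fin n × Fin n)} {x y : Fin n} {g h : Fin n × Fin n}

theorem mem_augment {e : Fin n × Fin n} :
    e ∈ augment N x y g h ↔
      e = (x, g.2) ∨ e = (g.1, h.2) ∨ e = (h.1, y) ∨ (e ∈ N ∧ e ≠ g ∧ e ≠ h) := by
  simp [augment]

theorem insert_insert_sdiff_pair {α : Type*} [DecidableEq α] {s : Finset α} {a b : α}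
    (ha : a ∈ s) (hb : b ∈ s) : insert a (insert b (s \ {a, b})) = s := by
  grind

theorem image_fst_augment (hg : g ∈ N) (hh : h ∈ N) :
    (augment N x y g h).image Prod.fst = insert x (N.image Prod.fst) := by
  conv_rhs => rw [← insert_insert_sdiff_pair hg hh]
  simp only [augment, image_insert]

theorem image_snd_augment (hg : g ∈ N) (hh : h ∈ N) :
    (augment N x y g h).image Prod.snd = insert y (N.image Prod.snd) := by
  conv_rhs => rw [← insert_insert_sdiff_pair hg hh]
  simp only [augment, image_insert]
  grind

theorem IsBipMatching.augment (hN : IsBipMatching N) (hx : x ∉ N.image Prod.fst)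
    (hy : y ∉ N.image Prod.snd) (hg : g ∈ N) (hh : h ∈ N) (hgh : g ≠ h) :
    IsBipMatching (augment N x y g h) := by
  have hR : ∀ f ∈ N \ {g, h}, f.1 ≠ g.1 ∧ f.1 ≠ h.1 ∧ f.2 ≠ g.2 ∧ f.2 ≠ h.2 := by
    intro f hf
    simp only [mem_sdiff, mem_insert, mem_singleton, not_or] at hf
    exact ⟨(hN f hf.1 g hg hf.2.1).1, (hN f hf.1 h hh hf.2.2).1, (hN f hf.1 g hg hf.2.1).2,
      (hN f hf.1 h hh hf.2.2).2⟩
  have hgh' := hN g hg h hh hgh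
  simp only [mem_image, not_exists, not_and] at hx hy
  refine (((hN.mono sdiff_subset).insert ?_ ?_).insert ?_ ?_).insert ?_ ?_ <;>
    simp only [image_insert, mem_insert, mem_image, not_or, not_exists, not_and]
  · exact fun f hf => (hR f hf).2.1
  · exact fun f hf => hy f (mem_sdiff.1 hf).1
  · exact ⟨hgh'.1, fun f hf => (hR f hf).1⟩
  · exact ⟨hy h hh, fun f hf => (hR f hf).2.2.2⟩
  · exact ⟨fun e => hx g hg e.symm, fun e => hx h hh e.symm, fun f hf => hx f (mem_sdiff.1 hf).1⟩
  · exact ⟨hgh'.2, hy g hg, fun f hf => (hR f hf).2.2.1⟩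

theorem card_augment (hN : IsBipMatching N) (hx : x ∉ N.image Prod.fst)
    (hy : y ∉ N.image Prod.snd) (hg : g ∈ N) (hh : h ∈ N) (hgh : g ≠ h) :
    #(augment N x y g h) = #N + 1 := by
  rw [← card_image_of_injOn (hN.augment hx hy hg hh hgh).injOn_fst, image_fst_augment hg hh,
    card_insert_of_notMem hx, card_image_of_injOn hN.injOn_fst]

theorem injOn_augment {c : Fin n × Fin n → ℕ} (hN : Set.InjOn c ↑N)
    (ha : c (x, g.2) ∉ N.image c) (hb : c (g.1, h.2) ∉ N.image c) (hd : c (h.1, y) ∉ N.image c)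
    (hab : c (x, g.2) ≠ c (g.1, h.2)) (had : c (x, g.2) ≠ c (h.1, y))
    (hbd : c (g.1, h.2) ≠ c (h.1, y)) :
    Set.InjOn c ↑(augment N x y g h) := by
  have hR : (N \ {g, h}).image c ⊆ N.image c := image_subset_image sdiff_subset
  refine (((hN.mono (coe_subset.2 sdiff_subset)).insert_of_notMem_image
    fun h' => hd (hR h')).insert_of_notMem_image ?_).insert_of_notMem_image ?_ <;>
    simp only [image_insert, mem_insert, not_or]
  · exact ⟨hbd, fun h' => hb (hR h')⟩
  · exact ⟨hab, had, fun h' => ha (hR h')⟩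

theorem card_augment_inter_le {G : Finset (Fin n × Fin n)} (e₀ : Fin n × Fin n)
    (hG : ∀ e ∈ ({(x, g.2), (g.1, h.2), (h.1, y)} : Finset (Fin n × Fin n)), e ∈ G → e = e₀) :
    #(augment N x y g h ∩ G) ≤ #(N ∩ G) + 1 := by
  refine (card_le_card fun e he => ?_).trans (card_insert_le e₀ (N ∩ G))
  obtain ⟨he, heG⟩ := mem_inter.1 he
  rw [mem_insert, mem_inter]
  rcases mem_augment.1 he with rfl | rfl | rfl | ⟨heN, -⟩ <;> simp_all

theorem card_sdiff_augment_le (M : Finset (Fin n × Fin n)) :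
    #(M \ augment N x y g h) ≤ #(M \ N) + 2 := by
  have hsub : M \ augment N x y g h ⊆ insert g (insert h (M \ N)) := by
    intro e he
    simp only [mem_sdiff, mem_augment, mem_insert] at he ⊢
    tauto
  have := card_insert_le g (insert h (M \ N))
  have := card_insert_le h (M \ N)
  have := card_le_card hsub
  omega

end Augment

section Extension

variable {n : ℕ}

structure IsExtension (M₀ E DX DY : Finset (Fin n × Fin n)) (c : Fin n × Fin n → ℕ) (k : ℕ)
    (N : Finset (Fin n × Fin n)) : Prop where
  subset : N ⊆ M₀ ∪ E ∪ DX ∪ DY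
  isBipMatching : IsBipMatching N
  injOn : Set.InjOn c ↑N
  image_fst : M₀.image Prod.fst ⊆ N.image Prod.fst
  image_snd : M₀.image Prod.snd ⊆ N.image Prod.snd
  card_eq : #N = #M₀ + k
  card_inter_E : #(N ∩ E) ≤ k
  card_inter_DX : #(N ∩ DX) ≤ k
  card_inter_DY : #(N ∩ DY) ≤ k
  card_sdiff : #(M₀ \ N) ≤ 2 * k
  fst_ne : ∀ e ∈ N ∩ DX, ∀ f ∈ M₀, e.1 ≠ f.1
  snd_ne : ∀ e ∈ N ∩ DY, ∀ f ∈ M₀, e.2 ≠ f.2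

namespace IsExtension

variable {M₀ E DX DY N : Finset (Fin n × Fin n)} {c : Fin n × Fin n → ℕ} {k : ℕ}

theorem zero (hM₀ : IsBipMatching M₀) (hc : Set.InjOn c ↑M₀) (hME : ColourDisjoint c M₀ E)
    (hMDX : ColourDisjoint c M₀ DX) (hMDY : ColourDisjoint c M₀ DY) :
    IsExtension M₀ E DX DY c 0 M₀ where
  subset := subset_union_left.trans <| subset_union_left.trans subset_union_left
  isBipMatching := hM₀
  injOn := hc
  image_fst := subset_rfl
  image_snd := subset_rfl
  card_eq := rfl
  card_inter_E := by simp [hME.inter_eq_empty]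
  card_inter_DX := by simp [hMDX.inter_eq_empty]
  card_inter_DY := by simp [hMDY.inter_eq_empty]
  card_sdiff := by simp
  fst_ne := by simp [hMDX.inter_eq_empty]
  snd_ne := by simp [hMDY.inter_eq_empty]

theorem succ (hN : IsExtension M₀ E DX DY c k N) {x y : Fin n} {g h : Fin n × Fin n}
    (hx : x ∉ N.image Prod.fst) (hy : y ∉ N.image Prod.snd) (hg : g ∈ N) (hh : h ∈ N)
    (hgh : g ≠ h) (haDX : (x, g.2) ∈ DX) (hbE : (g.1, h.2) ∈ E) (hdDY : (h.1, y) ∈ DY)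
    (ha : c (x, g.2) ∉ N.image c) (hb : c (g.1, h.2) ∉ N.image c) (hd : c (h.1, y) ∉ N.image c)
    (hEDX : ColourDisjoint c E DX) (hEDY : ColourDisjoint c E DY)
    (hDXDY : ColourDisjoint c DX DY) :
    IsExtension M₀ E DX DY c (k + 1) (augment N x y g h) := by
  have haE : (x, g.2) ∉ E := hEDX.notMem_left haDX
  have haDY : (x, g.2) ∉ DY := hDXDY.notMem_right haDX
  have hbDX : (g.1, h.2) ∉ DX := hEDX.notMem_right hbE
  have hbDY : (g.1, h.2) ∉ DY := hEDY.notMem_right hbE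
  have hdE : (h.1, y) ∉ E := hEDY.notMem_left hdDY
  have hdDX : (h.1, y) ∉ DX := hDXDY.notMem_left hdDY
  constructor
  · simp only [augment, insert_subset_iff, mem_union]
    exact ⟨.inl (.inr haDX), .inl (.inl (.inr hbE)), .inr hdDY, sdiff_subset.trans hN.subset⟩
  · exact hN.isBipMatching.augment hx hy hg hh hgh
  · exact injOn_augment hN.injOn ha hb hd (hEDX _ hbE _ haDX).symm (hDXDY _ haDX _ hdDY)
      (hEDY _ hbE _ hdDY)
  · exact hN.image_fst.trans (image_fst_augment hg hh ▸ subset_insert _ _)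
  · exact hN.image_snd.trans (image_snd_augment hg hh ▸ subset_insert _ _)
  · rw [card_augment hN.isBipMatching hx hy hg hh hgh, hN.card_eq, add_assoc]
  · simpa using (card_augment_inter_le (g.1, h.2) (by simp [haE, hdE])).trans
      (Nat.add_le_add_right hN.card_inter_E 1)
  · simpa using (card_augment_inter_le (x, g.2) (by simp [hbDX, hdDX])).trans
      (Nat.add_le_add_right hN.card_inter_DX 1)
  · simpa using (card_augment_inter_le (h.1, y) (by simp [haDY, hbDY])).trans
      (Nat.add_le_add_right hN.card_inter_DY 1)
  · exact (card_sdiff_augment_le M₀).trans (by have := hN.card_sdiff; omega)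
  · intro e he f hf
    obtain ⟨he, heDX⟩ := mem_inter.1 he
    rcases mem_augment.1 he with rfl | rfl | rfl | ⟨heN, -⟩
    · exact fun hxf => hx (hN.image_fst (mem_image.2 ⟨f, hf, hxf.symm⟩))
    · exact absurd heDX hbDX
    · exact absurd heDX hdDX
    · exact hN.fst_ne e (mem_inter.2 ⟨heN, heDX⟩) f hf
  · intro e he f hf
    obtain ⟨he, heDY⟩ := mem_inter.1 he
    rcases mem_augment.1 he with rfl | rfl | rfl | ⟨heN, -⟩
    · exact absurd heDY haDY
    · exact absurd heDY hbDY
    · exact fun hyf => hy (hN.image_snd (mem_image.2 ⟨f, hf, hyf.symm⟩))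
    · exact hN.snd_ne e (mem_inter.2 ⟨heN, heDY⟩) f hf

theorem le_card_pivots (hN : IsExtension M₀ E DX DY c k N) (hlt : #N < n)
    {D T : Finset (Fin n × Fin n)} {φ : Fin n × Fin n → Fin n × Fin n} {m : ℝ}
    (hND : #(N ∩ D) ≤ k) (hT : #T = n) (hφT : ∀ g, φ g ∈ T) (hφ : Set.InjOn φ ↑M₀)
    (hc : Set.InjOn c ↑(T ∩ D)) (hdeg : 2 * m ≤ #(T ∩ D)) (hm : 4 * ((n : ℝ) - #M₀) ≤ m) :
    m ≤ #((M₀ ∩ N).filter fun g => φ g ∈ D ∧ c (φ g) ∉ (N ∩ D).image c) := by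
  have hcount := card_add_card_inter_le_card_filter (S := M₀ ∩ N) (L := N ∩ D) (fun g _ => hφT g)
    (hφ.mono (coe_subset.2 inter_subset_left)) hc
  have hsplit := card_inter_add_card_sdiff M₀ N
  have hsdiff := hN.card_sdiff
  have hcard := hN.card_eq
  rw [hT] at hcount
  have hcount' : (#(M₀ ∩ N) : ℝ) + #(T ∩ D) ≤
      #((M₀ ∩ N).filter fun g => φ g ∈ D ∧ c (φ g) ∉ (N ∩ D).image c) + n + k := by
    exact_mod_cast hcount.trans (by omega)
  have hM₀ : (#(M₀ ∩ N) : ℝ) + 2 * k ≥ #M₀ := by exact_mod_cast (by omega : #(M₀ ∩ N) + 2 * k ≥ #M₀)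
  have hk : (#M₀ : ℝ) + k < n := by exact_mod_cast (by omega : #M₀ + k < n)
  linarith

theorem le_card_pivots_DX (hN : IsExtension M₀ E DX DY c k N) (hlt : #N < n)
    (hM₀ : IsBipMatching M₀) (hDX : IsProperColouring c DX) {x : Fin n} {m : ℝ}
    (hdX : 2 * m ≤ bdegX DX x) (htm : 4 * ((n : ℝ) - #M₀) ≤ m) :
    m ≤ #((M₀ ∩ N).filter fun g => (x, g.2) ∈ DX ∧ c (x, g.2) ∉ (N ∩ DX).image c) := by
  refine hN.le_card_pivots hlt hN.card_inter_DX (T := {x} ×ˢ univ) (by simp) (by simp)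
    (fun g hg g' hg' hgg' => hM₀.eq_of_snd_eq hg hg' (Prod.ext_iff.1 hgg').2)
    (fun e he f hf hef => hDX.eq_of_fst_eq (mem_inter.1 he).2 (mem_inter.1 hf).2 ?_ hef)
    (bdegX_eq_card_inter DX x ▸ hdX) htm
  simp only [coe_inter, Set.mem_inter_iff, coe_product, Set.mem_prod, coe_singleton,
    Set.mem_singleton_iff] at he hf
  rw [he.1.1, hf.1.1]

theorem le_card_pivots_DY (hN : IsExtension M₀ E DX DY c k N) (hlt : #N < n)
    (hM₀ : IsBipMatching M₀) (hDY : IsProperColouring c DY) {y : Fin n} {m : ℝ}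
    (hdY : 2 * m ≤ bdegY DY y) (htm : 4 * ((n : ℝ) - #M₀) ≤ m) :
    m ≤ #((M₀ ∩ N).filter fun h => (h.1, y) ∈ DY ∧ c (h.1, y) ∉ (N ∩ DY).image c) := by
  refine hN.le_card_pivots hlt hN.card_inter_DY (T := univ ×ˢ {y}) (by simp) (by simp)
    (fun h hh h' hh' hhh' => hM₀.eq_of_fst_eq hh hh' (Prod.ext_iff.1 hhh').1)
    (fun e he f hf hef => hDY.eq_of_snd_eq (mem_inter.1 he).2 (mem_inter.1 hf).2 ?_ hef)
    (bdegY_eq_card_inter DY y ▸ hdY) htm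
  simp only [coe_inter, Set.mem_inter_iff, coe_product, Set.mem_prod, coe_singleton,
    Set.mem_singleton_iff] at he hf
  rw [he.1.2, hf.1.2]

theorem exists_fresh_edge (hN : IsExtension M₀ E DX DY c k N) (hlt : #N < n) {p m : ℝ}
    (hm : 0 < m) (htp : 4 * ((n : ℝ) - #M₀) ≤ p * m) (hE : IsProperColouring c E)
    (hdense : BipDense E (p * m ^ 2) m) {A B : Finset (Fin n)} (hA : m ≤ #A) (hB : m ≤ #B) :
    ∃ q ∈ E, q.1 ∈ A ∧ q.2 ∈ B ∧ c q ∉ (N ∩ E).image c := by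
  obtain ⟨A', hA'A, B', hB'B, -, hmA', hA'B'⟩ := hdense.exists_subsets_card_eq hm hA hB
  have hlt' : #(N ∩ E) * #A' < #(E.filter fun q => q.1 ∈ A' ∧ q.2 ∈ B') := by
    have hk : (#(N ∩ E) : ℝ) < n - #M₀ := by
      have := hN.card_inter_E; have := hN.card_eq
      rw [lt_sub_iff_add_lt]; exact_mod_cast (by omega : #(N ∩ E) + #M₀ < n)
    have hp : 0 < p := by nlinarith [Nat.cast_nonneg (α := ℝ) #(N ∩ E)]
    have hA0 : (0 : ℝ) < #A' := hm.trans_le hmA'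
    have htA : 4 * ((n : ℝ) - #M₀) ≤ p * #A' :=
      htp.trans (mul_le_mul_of_nonneg_left hmA' hp.le)
    have : (#(N ∩ E) : ℝ) * #A' < #(E.filter fun q => q.1 ∈ A' ∧ q.2 ∈ B') :=
      calc (#(N ∩ E) : ℝ) * #A' < (n - #M₀) * #A' := mul_lt_mul_of_pos_right hk hA0
        _ ≤ p * #A' ^ 2 := by nlinarith
        _ ≤ _ := hA'B'
    exact_mod_cast this
  obtain ⟨q, hqF, hq⟩ := exists_mem_colour_notMem_image (fun q hq => (mem_filter.1 hq).2.1)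
    (fun q hq r hr => hE.eq_of_fst_eq (mem_filter.1 hq).1 (mem_filter.1 hr).1) hlt'
  obtain ⟨hqE, hqA, hqB⟩ := mem_filter.1 hqF
  exact ⟨q, hqE, hA'A hqA, hB'B hqB, hq⟩

theorem exists_succ (hN : IsExtension M₀ E DX DY c k N) (hlt : #N < n) {p m : ℝ} (hm : 0 < m)
    (htm : 4 * ((n : ℝ) - #M₀) ≤ m) (htp : 4 * ((n : ℝ) - #M₀) ≤ p * m)
    (hM₀ : IsBipMatching M₀) (hE : IsProperColouring c E) (hDX : IsProperColouring c DX)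
    (hDY : IsProperColouring c DY) (hME : ColourDisjoint c M₀ E)
    (hMDX : ColourDisjoint c M₀ DX) (hMDY : ColourDisjoint c M₀ DY)
    (hEDX : ColourDisjoint c E DX) (hEDY : ColourDisjoint c E DY)
    (hDXDY : ColourDisjoint c DX DY) (hdense : BipDense E (p * m ^ 2) m)
    (hdX : ∀ x, 2 * m ≤ bdegX DX x) (hdY : ∀ y, 2 * m ≤ bdegY DY y) :
    ∃ N', IsExtension M₀ E DX DY c (k + 1) N' := by
  have hsub : N ⊆ M₀ ∪ E ∪ DX ∪ DY := hN.subset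
  obtain ⟨x, hx⟩ := exists_notMem_image_of_card_lt Prod.fst hlt
  obtain ⟨y, hy⟩ := exists_notMem_image_of_card_lt Prod.snd hlt
  set QX := (M₀ ∩ N).filter fun g => (x, g.2) ∈ DX ∧ c (x, g.2) ∉ (N ∩ DX).image c
  set QY := (M₀ ∩ N).filter fun h => (h.1, y) ∈ DY ∧ c (h.1, y) ∉ (N ∩ DY).image c
  have hQX : m ≤ #QX := hN.le_card_pivots_DX hlt hM₀ hDX (hdX x) htm
  have hQY : m ≤ #QY := hN.le_card_pivots_DY hlt hM₀ hDY (hdY y) htm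
  have hQXM₀ : QX ⊆ M₀ := filter_subset _ _ |>.trans inter_subset_left
  have hQYM₀ : QY ⊆ M₀ := filter_subset _ _ |>.trans inter_subset_left
  obtain ⟨q, hqE, hqA, hqB, hq⟩ := hN.exists_fresh_edge hlt hm htp hE hdense
    (A := QX.image Prod.fst) (B := QY.image Prod.snd)
    (by rwa [card_image_of_injOn (hM₀.injOn_fst.mono (coe_subset.2 hQXM₀))])
    (by rwa [card_image_of_injOn (hM₀.injOn_snd.mono (coe_subset.2 hQYM₀))])
  obtain ⟨g, hgQ, hgq⟩ := mem_image.1 hqA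
  obtain ⟨h, hhQ, hhq⟩ := mem_image.1 hqB
  obtain rfl : q = (g.1, h.2) := Prod.ext hgq.symm hhq.symm
  obtain ⟨hgN, hgDX, hgc⟩ := mem_filter.1 hgQ
  obtain ⟨hhN, hhDY, hhc⟩ := mem_filter.1 hhQ
  have hg := (mem_inter.1 hgN).2
  have hh := (mem_inter.1 hhN).2
  have hb := (hME.union_left hEDX.symm).union_left hEDY.symm |>.colour_notMem_image
    (by intro e he; have := hsub he; simp only [mem_union] at this ⊢; tauto) hqE hq
  have ha := (hMDX.union_left hEDX).union_left hDXDY.symm |>.colour_notMem_image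
    (by intro e he; have := hsub he; simp only [mem_union] at this ⊢; tauto) hgDX hgc
  have hd := (hMDY.union_left hEDY).union_left hDXDY |>.colour_notMem_image
    (by intro e he; have := hsub he; simp only [mem_union] at this ⊢; tauto) hhDY hhc
  have hgh : g ≠ h := by
    rintro rfl
    exact hb (mem_image_of_mem c hg)
  exact ⟨_, hN.succ hx hy hg hh hgh hgDX hqE hhDY ha hb hd hEDX hEDY hDXDY⟩

theorem exists_card_eq (h0 : IsExtension M₀ E DX DY c 0 M₀) (hM₀ : #M₀ ≤ n)
    (step : ∀ k N, IsExtension M₀ E DX DY c k N → #N < n →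
      ∃ N', IsExtension M₀ E DX DY c (k + 1) N') :
    ∃ N, IsExtension M₀ E DX DY c (n - #M₀) N := by
  suffices ∀ k ≤ n - #M₀, ∃ N, IsExtension M₀ E DX DY c k N from this _ le_rfl
  intro k hk
  induction k with
  | zero => exact ⟨M₀, h0⟩
  | succ k ih =>
    obtain ⟨N, hN⟩ := ih (by omega)
    exact step k N hN (by rw [hN.card_eq]; omega)

end IsExtension

end Extension

theorem four_mul_le_mul_of_le_rpow {θ p ε : ℝ} (hθ : 0 ≤ θ) (hθ1 : θ ≤ 1) (hp : 0 ≤ p)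
    (hεθ : ε ≤ θ ^ (4 : ℝ) / 4) (hεp : ε ≤ p ^ (4 : ℝ) / 4) : 4 * ε ≤ p * θ := by
  rw [Real.rpow_ofNat] at hεθ hεp
  have hmin : ε ≤ min θ p ^ 4 / 4 := by
    rcases min_cases θ p with ⟨h, -⟩ | ⟨h, -⟩ <;> rwa [h]
  have hpow : min θ p ^ 4 ≤ min θ p ^ 2 :=
    pow_le_pow_of_le_one (le_min hθ hp) (min_le_of_left_le hθ1) (by norm_num)
  nlinarith [mul_le_mul (min_le_left θ p) (min_le_right θ p) (le_min hθ hp) hθ]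

/-- Completing a rainbow matching: a nearly perfect rainbow matching `M₀`,
a `(p(θn)², θn)`-dense graph `E` and graphs `DX`, `DY` of minimum degree `≥ 2θn`, pairwise
colour-disjoint inside a properly coloured balanced bipartite graph `K`, can be combined into
a perfect rainbow matching `N` using few edges of `E`, `DX`, `DY`, whose `DX`/`DY` edges avoid
`V(M₀)` on the appropriate side. -/
theorem statement_13 :
    ∃ C : ℝ, 0 < C ∧
      ∀ (n : ℕ) (θ p ε : ℝ),
        0 < n → 0 < θ → θ ≤ 1 / C → 0 < p → p ≤ 1 / C →
        0 < ε → ε ≤ θ ^ C / C → ε ≤ p ^ C / C → C / ε ^ C ≤ (n : ℝ) →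
        ∀ (K M₀ E DX DY : Finset (Fin n × Fin n)) (c : Fin n × Fin n → ℕ),
          (∀ e ∈ K, ∀ f ∈ K, e ≠ f → e.1 = f.1 ∨ e.2 = f.2 → c e ≠ c f) →
          M₀ ⊆ K → E ⊆ K → DX ⊆ K → DY ⊆ K →
          ColourDisjoint c M₀ E → ColourDisjoint c M₀ DX → ColourDisjoint c M₀ DY →
          ColourDisjoint c E DX → ColourDisjoint c E DY → ColourDisjoint c DX DY →
          IsBipMatching M₀ → Set.InjOn c ↑M₀ → (1 - ε) * n ≤ (M₀.card : ℝ) →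
          BipDense E (p * (θ * n) ^ 2) (θ * n) →
          (∀ x : Fin n, 2 * θ * n ≤ (bdegX DX x : ℝ)) →
          (∀ y : Fin n, 2 * θ * n ≤ (bdegY DY y : ℝ)) →
          ∃ N : Finset (Fin n × Fin n),
            N ⊆ M₀ ∪ E ∪ DX ∪ DY ∧
            IsBipMatching N ∧ N.card = n ∧ Set.InjOn c ↑N ∧
            ((N ∩ E).card : ℝ) ≤ ε * n ∧
            ((N ∩ DX).card : ℝ) ≤ ε * n ∧
            ((N ∩ DY).card : ℝ) ≤ ε * n ∧
            (∀ e ∈ N ∩ DX, ∀ f ∈ M₀, e.1 ≠ f.1) ∧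
            (∀ e ∈ N ∩ DY, ∀ f ∈ M₀, e.2 ≠ f.2) := by
  refine ⟨4, by norm_num, ?_⟩
  intro n θ p ε hn hθ hθC hp hpC _ hεθ hεp _ K M₀ E DX DY c hK _ hEK hDXK hDYK hME hMDX hMDY
    hEDX hEDY hDXDY hM₀ hcM₀ hcardM₀ hdense hdX hdY
  have hpθ : 4 * ε ≤ p * θ :=
    four_mul_le_mul_of_le_rpow hθ.le (by linarith) hp.le hεθ hεp
  have hθn : 0 < θ * n := mul_pos hθ (Nat.cast_pos.2 hn)
  have htp : 4 * ((n : ℝ) - #M₀) ≤ p * (θ * n) := by nlinarith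
  have htθ : 4 * ((n : ℝ) - #M₀) ≤ θ * n := htp.trans (by nlinarith)
  have hK' : IsProperColouring c K := hK
  obtain ⟨N, hN⟩ := (IsExtension.zero hM₀ hcM₀ hME hMDX hMDY).exists_card_eq hM₀.card_le
    fun k N hN hlt => hN.exists_succ hlt hθn htθ htp hM₀ (hK'.mono hEK) (hK'.mono hDXK)
      (hK'.mono hDYK) hME hMDX hMDY hEDX hEDY hDXDY hdense
      (fun x => mul_assoc 2 θ n ▸ hdX x) (fun y => mul_assoc 2 θ n ▸ hdY y)
  have hk : ((n - #M₀ : ℕ) : ℝ) ≤ ε * n := by rw [Nat.cast_sub hM₀.card_le]; linarith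
  refine ⟨N, hN.subset, hN.isBipMatching, by have := hN.card_eq; have := hM₀.card_le; omega,
    hN.injOn, ?_, ?_, ?_, hN.fst_ne, hN.snd_ne⟩
  · exact (Nat.cast_le.2 hN.card_inter_E).trans hk
  · exact (Nat.cast_le.2 hN.card_inter_DX).trans hk
  · exact (Nat.cast_le.2 hN.card_inter_DY).trans hk
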